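/- arXiv:math/0407193 — 5 statements merged into one kernel-verified Lean document; each statement's English description precedes it below -/
import Mathlib

section
/- The subgroup of GL₃(ℂ) generated by g = diag(μ⁴, μ², μ) and the cyclic permutation matrix h (where μ = e^{2πi/7}) has order 21 and is non-abelian. -/
open Complex Matrix

theorem order21_subgroup
    (μ : ℂ) (hμ : μ = exp (2 * Real.pi * I / 7))
    (g h : GL (Fin 3) ℂ)
    (hg : (g : Matrix (Fin 3) (Fin 3) ℂ) = !![μ ^ 4, 0, 0; 0, μ ^ 2, 0; 0, 0, μ])
    (hh : (h : Matrix (Fin 3) (Fin 3) ℂ) = !![0, 1, 0; 0, 0, 1; 1, 0, 0]) :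
    Nat.card (Subgroup.closure {g, h} : Subgroup (GL (Fin 3) ℂ)) = 21 ∧
    ¬ (∀ x ∈ Subgroup.closure {g, h}, ∀ y ∈ Subgroup.closure {g, h}, x * y = y * x) := by
  have hprim : IsPrimitiveRoot μ 7 := by
    rw [hμ]; simpa using Complex.isPrimitiveRoot_exp 7 (by norm_num)
  have hμ0 : μ ≠ 0 := by rw [hμ]; exact Complex.exp_ne_zero _
  have hμpow : ∀ k : ℕ, μ ^ k = 1 ↔ 7 ∣ k := fun k => hprim.pow_eq_one_iff_dvd k
  have h7 : μ ^ 7 = 1 := (hμpow 7).mpr dvd_rfl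
  have hred : ∀ a b : ℕ, μ ^ (a + 7 * b) = μ ^ a := by
    intro a b; rw [pow_add, pow_mul, h7, one_pow, mul_one]
  have hMdiag : (g : Matrix (Fin 3) (Fin 3) ℂ) = Matrix.diagonal ![μ ^ 4, μ ^ 2, μ] := by
    rw [hg]; ext i j; fin_cases i <;> fin_cases j <;>
      simp [Matrix.diagonal_apply, Matrix.vecHead, Matrix.vecTail]
  have gpow : ∀ k : ℕ, ((g ^ k : GL (Fin 3) ℂ) : Matrix (Fin 3) (Fin 3) ℂ)
      = Matrix.diagonal ![μ ^ (4 * k), μ ^ (2 * k), μ ^ k] := by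
    intro k
    rw [Units.val_pow_eq_pow_val, hMdiag, Matrix.diagonal_pow]
    have e : (![μ ^ 4, μ ^ 2, μ] : Fin 3 → ℂ) ^ k = ![μ ^ (4 * k), μ ^ (2 * k), μ ^ k] := by
      funext i; fin_cases i <;> simp [pow_mul]
    rw [e]
  have hg7 : g ^ 7 = 1 := by
    apply Units.ext
    rw [gpow 7, Units.val_one]
    have e1 : μ ^ (4 * 7) = 1 := (hμpow _).mpr ⟨4, by ring⟩
    have e2 : μ ^ (2 * 7) = 1 := (hμpow _).mpr ⟨2, by ring⟩
    rw [e1, e2, h7, show ![(1 : ℂ), 1, 1] = fun _ => 1 from by funext i; fin_cases i <;> rfl,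
      Matrix.diagonal_one]
  have hh3 : h ^ 3 = 1 := by
    apply Units.ext
    rw [Units.val_pow_eq_pow_val, hh, pow_succ, pow_succ, pow_one]
    norm_num [Matrix.mul_fin_three, ← Matrix.one_fin_three]
  have h16 : μ ^ 16 = μ ^ 2 := by rw [show (16 : ℕ) = 2 + 7 * 2 from rfl, hred]
  have h8 : μ ^ 8 = μ ^ 1 := by rw [show (8 : ℕ) = 1 + 7 * 1 from rfl, hred]
  have hcomm : h * g = g ^ 4 * h := by
    apply Units.ext
    rw [Units.val_mul, Units.val_mul, gpow 4, hg, hh]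
    ext i j
    fin_cases i <;> fin_cases j <;>
      simp [Matrix.mul_apply, Fin.sum_univ_three, Matrix.diagonal_apply,
        Matrix.vecHead, Matrix.vecTail] <;>
      norm_num [h16, h8]
  have comm_pow : ∀ a : ℕ, h * g ^ a = g ^ (4 * a) * h := by
    intro a; induction a with
    | zero => simp
    | succ n ih =>
      rw [pow_succ, ← mul_assoc, ih, mul_assoc, hcomm, ← mul_assoc, ← pow_add,
        show 4 * n + 4 = 4 * (n + 1) from by ring]
  have comm_pow2 : ∀ b a : ℕ, h ^ b * g ^ a = g ^ (4 ^ b * a) * h ^ b := by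
    intro b; induction b with
    | zero => intro a; simp
    | succ n ih =>
      intro a
      rw [pow_succ, mul_assoc, comm_pow a, ← mul_assoc, ih, mul_assoc,
        show 4 ^ n * (4 * a) = 4 ^ (n + 1) * a from by ring, ← pow_succ]
  have gmod : ∀ a : ℕ, g ^ a = g ^ (a % 7) := by
    intro a
    conv_lhs => rw [← Nat.div_add_mod a 7]
    rw [pow_add, pow_mul, hg7, one_pow, one_mul]
  have hmod : ∀ a : ℕ, h ^ a = h ^ (a % 3) := by
    intro a
    conv_lhs => rw [← Nat.div_add_mod a 3]
    rw [pow_add, pow_mul, hh3, one_pow, one_mul]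
  set K : Subgroup (GL (Fin 3) ℂ) :=
    { carrier := {x | ∃ a b : ℕ, x = g ^ a * h ^ b}
      one_mem' := ⟨0, 0, by simp⟩
      mul_mem' := by
        rintro x y ⟨a, b, rfl⟩ ⟨c, d, rfl⟩
        refine ⟨a + 4 ^ b * c, b + d, ?_⟩
        rw [pow_add, pow_add, mul_assoc]
        rw [← mul_assoc (h ^ b), comm_pow2 b c, mul_assoc, ← mul_assoc]
      inv_mem' := by
        rintro x ⟨a, b, rfl⟩
        have key : (g ^ a * h ^ b) * (h ^ (2 * b) * g ^ (6 * a)) = 1 := by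
          rw [mul_assoc, ← mul_assoc (h ^ b), ← pow_add,
            show b + 2 * b = 3 * b from by ring, pow_mul, hh3, one_pow, one_mul,
            ← pow_add, show a + 6 * a = 7 * a from by ring, pow_mul, hg7, one_pow]
        rw [inv_eq_of_mul_eq_one_right key]
        exact ⟨4 ^ (2 * b) * (6 * a), 2 * b, by rw [comm_pow2]⟩ } with hK
  have hKclosure : Subgroup.closure {g, h} = K := by
    apply le_antisymm
    · rw [Subgroup.closure_le]
      rintro x hx
      rcases hx with rfl | rfl
      · exact ⟨1, 0, by simp⟩
      · exact ⟨0, 1, by simp⟩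
    · rintro x ⟨a, b, rfl⟩
      exact mul_mem (pow_mem (Subgroup.subset_closure (by simp)) a)
        (pow_mem (Subgroup.subset_closure (by simp)) b)
  set f : Fin 7 × Fin 3 → GL (Fin 3) ℂ := fun p => g ^ (p.1 : ℕ) * h ^ (p.2 : ℕ) with hf
  have hrange : (K : Set (GL (Fin 3) ℂ)) = Set.range f := by
    ext x
    constructor
    · rintro ⟨a, b, rfl⟩
      exact ⟨(⟨a % 7, Nat.mod_lt _ (by norm_num)⟩, ⟨b % 3, Nat.mod_lt _ (by norm_num)⟩),
        by rw [hf]; dsimp; rw [← gmod, ← hmod]⟩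
    · rintro ⟨⟨a, b⟩, rfl⟩
      exact ⟨(a : ℕ), (b : ℕ), rfl⟩
  have hgnz : ∀ k : ℕ, ((g ^ k : GL (Fin 3) ℂ) : Matrix (Fin 3) (Fin 3) ℂ) 0 0 ≠ 0 := by
    intro k
    rw [gpow]
    simp only [Matrix.diagonal_apply_eq]
    simpa using pow_ne_zero (4 * k) hμ0
  have hinj : Function.Injective f := by
    rintro ⟨⟨a, ha⟩, ⟨b, hb⟩⟩ ⟨⟨c, hc⟩, ⟨d, hd⟩⟩ hEq
    simp only [hf] at hEq
    have L : g ^ (7 - c) * (g ^ a * h ^ b) * h ^ (2 * b) = g ^ (7 - c + a) := by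
      rw [← mul_assoc, ← pow_add, mul_assoc, ← pow_add,
        show b + 2 * b = 3 * b from by ring, pow_mul, hh3, one_pow, mul_one]
    have R : g ^ (7 - c) * (g ^ c * h ^ d) * h ^ (2 * b) = h ^ (d + 2 * b) := by
      rw [← mul_assoc, ← pow_add, show 7 - c + c = 7 from by omega, hg7, one_mul, ← pow_add]
    have key : g ^ (7 - c + a) = h ^ (d + 2 * b) := by
      rw [← L, hEq, R]
    have key2 : g ^ (7 - c + a) = h ^ ((d + 2 * b) % 3) := by rw [key, ← hmod]
    have hm3 : (d + 2 * b) % 3 = 0 ∨ (d + 2 * b) % 3 = 1 ∨ (d + 2 * b) % 3 = 2 := by omega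
    rcases hm3 with hm | hm | hm
    · rw [hm, pow_zero] at key2
      have e1 : ((g ^ (7 - c + a) : GL (Fin 3) ℂ) : Matrix (Fin 3) (Fin 3) ℂ) 2 2 = 1 := by
        rw [key2]; simp
      rw [gpow] at e1
      simp only [Matrix.diagonal_apply_eq] at e1
      have e2 : μ ^ (7 - c + a) = 1 := by simpa using e1
      have e3 : 7 ∣ 7 - c + a := (hμpow _).mp e2
      have hac : a = c := by omega
      have hbd : b = d := by omega
      simp [hac, hbd]
    · exfalso
      rw [hm, pow_one] at key2
      apply hgnz (7 - c + a)
      rw [key2, hh]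
      simp
    · exfalso
      rw [hm] at key2
      apply hgnz (7 - c + a)
      rw [key2, Units.val_pow_eq_pow_val, hh, pow_two]
      norm_num [Matrix.mul_fin_three]
  constructor
  · rw [hKclosure]
    calc Nat.card K = Nat.card (Set.range f) := Nat.card_congr (Equiv.setCongr hrange)
      _ = Nat.card (Fin 7 × Fin 3) := Nat.card_range_of_injective hinj
      _ = 21 := by simp
  · intro Hab
    have hgK : g ∈ Subgroup.closure ({g, h} : Set (GL (Fin 3) ℂ)) :=
      Subgroup.subset_closure (by simp)
    have hhK : h ∈ Subgroup.closure ({g, h} : Set (GL (Fin 3) ℂ)) :=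
      Subgroup.subset_closure (by simp)
    have hEq := Hab g hgK h hhK
    have hmat : ((g * h : GL (Fin 3) ℂ) : Matrix (Fin 3) (Fin 3) ℂ) 0 1
        = ((h * g : GL (Fin 3) ℂ) : Matrix (Fin 3) (Fin 3) ℂ) 0 1 := by rw [hEq]
    rw [Units.val_mul, Units.val_mul, hg, hh, Matrix.mul_fin_three, Matrix.mul_fin_three] at hmat
    norm_num at hmat
    -- hmat : μ ^ 4 = μ ^ 2
    have h2 : μ ^ 2 * μ ^ 2 = μ ^ 2 * 1 := by rw [mul_one, ← pow_add]; exact hmat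
    have h3 : μ ^ 2 = 1 := mul_left_cancel₀ (pow_ne_zero 2 hμ0) h2
    have := (hμpow 2).mp h3
    omega
end

section
/- The matrix r = (-1/(√7 i))·[[μ-μ⁶, μ²-μ⁵, μ⁴-μ³],[μ²-μ⁵, μ⁴-μ³, μ-μ⁶],[μ⁴-μ³, μ-μ⁶, μ²-μ⁵]], with μ = e^{2πi/7}, satisfies r² = 1. -/
open Complex Matrix

set_option maxHeartbeats 1000000 in

theorem r_squared_one
    (μ : ℂ) (hμ : μ = exp (2 * Real.pi * I / 7))
    (r : Matrix (Fin 3) (Fin 3) ℂ)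
    (hr : r = (-1 / (Real.sqrt 7 * I)) •
      !![μ - μ ^ 6, μ ^ 2 - μ ^ 5, μ ^ 4 - μ ^ 3;
         μ ^ 2 - μ ^ 5, μ ^ 4 - μ ^ 3, μ - μ ^ 6;
         μ ^ 4 - μ ^ 3, μ - μ ^ 6, μ ^ 2 - μ ^ 5]) :
    r ^ 2 = 1 := by
  have h7 : ((Real.sqrt 7 : ℂ))^2 = 7 := by
    rw [← Complex.ofReal_pow, Real.sq_sqrt (by norm_num : (7:ℝ) ≥ 0)]
    norm_num
  have hμ7 : μ ^ 7 = 1 := by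
    rw [hμ, ← Complex.exp_nat_mul]
    rw [show (7:ℕ) * (2 * (Real.pi:ℂ) * I / 7) = 2 * Real.pi * I by push_cast; ring]
    exact Complex.exp_two_pi_mul_I
  have hne : μ ≠ 1 := by
    have him : μ.im = Real.sin (2 * Real.pi / 7) := by
      rw [hμ, show 2 * (Real.pi:ℂ) * I / 7 = ((2 * Real.pi / 7 : ℝ) : ℂ) * I by
        push_cast; ring]
      exact Complex.exp_ofReal_mul_I_im _
    intro h
    rw [h] at him
    have hpos : 0 < Real.sin (2 * Real.pi / 7) := by
      apply Real.sin_pos_of_pos_of_lt_pi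
      · positivity
      · nlinarith [Real.pi_pos]
    simp at him
    linarith
  have hsum : μ^6 + μ^5 + μ^4 + μ^3 + μ^2 + μ + 1 = 0 := by
    have hz : (μ - 1) * (μ^6 + μ^5 + μ^4 + μ^3 + μ^2 + μ + 1) = 0 := by
      linear_combination hμ7
    rcases mul_eq_zero.1 hz with h | h
    · exact absurd (sub_eq_zero.1 h) hne
    · exact h
  have hsq : ((Real.sqrt 7 : ℂ) * I) * ((Real.sqrt 7 : ℂ) * I) = -7 := by
    linear_combination I^2 * h7 + 7 * Complex.I_sq
  have hc : (-1 / ((Real.sqrt 7 : ℂ) * I)) * (-1 / ((Real.sqrt 7 : ℂ) * I)) = -1/7 := by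
    rw [div_mul_div_comm, hsq]
    norm_num
  subst hr
  rw [pow_two, Matrix.smul_mul, Matrix.mul_smul, smul_smul, hc, Matrix.mul_fin_three,
    Matrix.one_fin_three]
  ext i j
  fin_cases i <;> fin_cases j <;>
    simp [Matrix.smul_apply, Matrix.vecHead, Matrix.vecTail] <;>
  first
    | linear_combination (-1/7 : ℂ) * hsum + (-1/7 : ℂ) * (μ^5 + μ^3 + μ - 6) * hμ7
    | linear_combination (μ^4 - μ^3) * hμ7
end

section
/- The matrices r and h = [[0,1,0],[0,0,1],[1,0,0]] satisfy (rh)² = 1, where r = (-1/(√7 i))·[[μ-μ⁶, μ²-μ⁵, μ⁴-μ³],[μ²-μ⁵, μ⁴-μ³, μ-μ⁶],[μ⁴-μ³, μ-μ⁶, μ²-μ⁵]] and μ = e^{2πi/7}. -/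
open Complex Matrix

theorem rh_squared_one
    (μ : ℂ) (hμ : μ = exp (2 * Real.pi * I / 7))
    (r h : Matrix (Fin 3) (Fin 3) ℂ)
    (hr : r = (-1 / (Real.sqrt 7 * I)) •
      !![μ - μ ^ 6, μ ^ 2 - μ ^ 5, μ ^ 4 - μ ^ 3;
         μ ^ 2 - μ ^ 5, μ ^ 4 - μ ^ 3, μ - μ ^ 6;
         μ ^ 4 - μ ^ 3, μ - μ ^ 6, μ ^ 2 - μ ^ 5])
    (hh : h = !![0, 1, 0; 0, 0, 1; 1, 0, 0]) :
    (r * h) ^ 2 = 1 := by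
  -- μ^7 = 1
  have hμ7 : μ ^ 7 = 1 := by
    rw [hμ, ← Complex.exp_nat_mul]
    rw [show (7 : ℕ) * (2 * ↑Real.pi * I / 7) = 2 * ↑Real.pi * I by push_cast; ring]
    exact Complex.exp_two_pi_mul_I
  -- μ ≠ 1
  have hμne1 : μ ≠ 1 := by
    rw [hμ]
    intro hc
    rw [Complex.exp_eq_one_iff] at hc
    obtain ⟨n, hn⟩ := hc
    have hπ : (Real.pi : ℂ) ≠ 0 := by
      exact_mod_cast Real.pi_ne_zero
    have h2πI : (2 * (Real.pi : ℂ) * I) ≠ 0 := by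
      simp [hπ, I_ne_zero]
    have hcanc : (2 * (Real.pi : ℂ) * I) * ((1 : ℂ) / 7) =
        (2 * (Real.pi : ℂ) * I) * n := by
      linear_combination hn
    have h17 : ((1 : ℂ) / 7) = n := mul_left_cancel₀ h2πI hcanc
    have h7 : (7 : ℂ) * n = 1 := by linear_combination (7 : ℂ) * h17.symm
    have : (7 : ℤ) * n = 1 := by exact_mod_cast h7
    omega
  -- cyclotomic sum
  have hsum : 1 + μ + μ ^ 2 + μ ^ 3 + μ ^ 4 + μ ^ 5 + μ ^ 6 = 0 := by
    have h0 : (μ - 1) * (1 + μ + μ ^ 2 + μ ^ 3 + μ ^ 4 + μ ^ 5 + μ ^ 6) = 0 := by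
      linear_combination hμ7
    exact (mul_eq_zero.mp h0).resolve_left (sub_ne_zero.mpr hμne1)
  -- sqrt 7 facts
  have hs2 : ((Real.sqrt 7 : ℂ)) ^ 2 = 7 := by
    norm_cast
    rw [Real.sq_sqrt] <;> norm_num
  have hsne : ((Real.sqrt 7 : ℂ)) ≠ 0 := by
    intro h0
    rw [h0] at hs2
    norm_num at hs2
  subst hr hh
  set c : ℂ := -1 / (Real.sqrt 7 * I) with hc
  set M : Matrix (Fin 3) (Fin 3) ℂ :=
    !![μ - μ ^ 6, μ ^ 2 - μ ^ 5, μ ^ 4 - μ ^ 3;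
       μ ^ 2 - μ ^ 5, μ ^ 4 - μ ^ 3, μ - μ ^ 6;
       μ ^ 4 - μ ^ 3, μ - μ ^ 6, μ ^ 2 - μ ^ 5] with hM
  set H : Matrix (Fin 3) (Fin 3) ℂ := !![0, 1, 0; 0, 0, 1; 1, 0, 0] with hH
  have key : (M * H) * (M * H) = (-7 : ℂ) • 1 := by
    ext i j
    fin_cases i <;> fin_cases j <;>
      simp [hM, hH, Matrix.mul_apply, Fin.sum_univ_succ, Matrix.one_apply,
        Matrix.smul_apply] <;>
      first
      | linear_combination (7 - 7*μ + μ^2 - μ^3 + μ^4 - μ^5 + μ^6) * hsum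
      | linear_combination (μ^3 - 2*μ^4 + μ^5) * hsum
  have keyoff : ∀ i j, i ≠ j → ((M * H) * (M * H)) i j = 0 := by
    intro i j hij
    rw [key]
    simp [Matrix.one_apply, hij]
  have hexp : (c • M * H) ^ 2 = (c * c) • ((M * H) * (M * H)) := by
    rw [pow_two, Matrix.smul_mul, Matrix.smul_mul, Matrix.mul_smul, smul_smul]
  rw [hexp, key, smul_smul]
  have hsq : ((Real.sqrt 7 : ℂ) * I) ^ 2 = -7 := by
    rw [mul_pow, hs2, I_sq]; ring
  have hcc : c * c = 1 / ((Real.sqrt 7 : ℂ) * I) ^ 2 := by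
    rw [hc]; ring
  have hfin : c * c * (-7) = 1 := by
    rw [hcc, hsq]; norm_num
  rw [hfin, one_smul]
end

section
/- Let μ = e^{2πi/7} and η = μ + μ² + μ⁴. Then the ring ℤ[μ] is a free ℤ[η]-module of rank 3 with basis {1, μ, μ²}, i.e., ℤ[μ] = ℤ[η] ⊕ μℤ[η] ⊕ μ²ℤ[η]. -/
/-!
The ring `ℤ[μ]` has `ℤ`-basis `1, μ, …, μ⁵`: the cyclotomic polynomial `Φ₇` is monic of degree 6
and is the minimal polynomial of `μ` over `ℚ`. Since `η² + η + 2 = 0`, `ℤ[η] = ℤ + ℤη`. Writing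
`a, b, c ∈ ℤ[η]` in the basis `1, η` and using `μ⁶ = -(1 + μ + ⋯ + μ⁵)`, the coordinates of
`a + μb + μ²c` in `1, …, μ⁵` are a unimodular integral linear transformation of the six
coordinates of `(a, b, c)`, which gives existence and uniqueness at once.
-/

open Complex Polynomial

theorem Subring.mem_closure_singleton_iff_exists_aeval {R : Type*} [CommRing R] {x z : R} :
    z ∈ Subring.closure {x} ↔ ∃ p : ℤ[X], aeval x p = z := by
  rw [← mem_subalgebraOfSubring, ← Algebra.adjoin_int, Algebra.adjoin_singleton_eq_range_aeval,
    AlgHom.mem_range]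

theorem Subring.mem_closure_singleton_iff_of_monic {R : Type*} [CommRing R] [Nontrivial R]
    {x z : R} {m : ℤ[X]} {n : ℕ} (hm : m.Monic) (hdeg : m.natDegree = n) (hx : aeval x m = 0) :
    z ∈ Subring.closure {x} ↔ ∃ c : Fin n → ℤ, ∑ i, c i * x ^ (i : ℕ) = z := by
  rw [Subring.mem_closure_singleton_iff_exists_aeval]
  constructor
  · rintro ⟨p, rfl⟩
    have hm1 : m ≠ 1 := by rintro rfl; simp at hx
    have hlt : (p %ₘ m).natDegree < n := hdeg ▸ natDegree_modByMonic_lt p hm hm1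
    refine ⟨fun i => (p %ₘ m).coeff i, ?_⟩
    rw [← aeval_modByMonic_eq_self_of_root hx, aeval_eq_sum_range' hlt,
      ← Fin.sum_univ_eq_sum_range (fun i => (p %ₘ m).coeff i • x ^ i)]
    simp [zsmul_eq_mul]
  · rintro ⟨c, rfl⟩
    exact ⟨∑ i, C (c i) * X ^ (i : ℕ), by simp⟩

theorem Subring.mem_closure_singleton_iff_of_sq_add_self_add_two_eq_zero {R : Type*}
    [CommRing R] [Nontrivial R] {x z : R} (hx : x ^ 2 + x + 2 = 0) :
    z ∈ Subring.closure {x} ↔ ∃ u v : ℤ, u + v * x = z := by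
  have hm : (X ^ 2 + X + 2 : ℤ[X]).Monic := by monicity!
  have hdeg : (X ^ 2 + X + 2 : ℤ[X]).natDegree = 2 := by compute_degree!
  have hroot : aeval x (X ^ 2 + X + 2 : ℤ[X]) = 0 := by simpa [map_ofNat] using hx
  rw [Subring.mem_closure_singleton_iff_of_monic hm hdeg hroot]
  simp [Fin.sum_univ_two, Fin.exists_fin_succ_pi]

theorem IsPrimitiveRoot.linearIndependent_int_pow {K : Type*} [Field K] [CharZero K] {μ : K}
    {n : ℕ} (h : IsPrimitiveRoot μ n) (hn : 0 < n) :
    LinearIndependent ℤ fun i : Fin n.totient => μ ^ (i : ℕ) := by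
  have hdeg : (minpoly ℚ μ).natDegree = n.totient := by
    rw [← cyclotomic_eq_minpoly_rat h hn, natDegree_cyclotomic]
  exact hdeg ▸ (linearIndependent_pow μ).restrict_scalars' ℤ

theorem IsPrimitiveRoot.mem_subring_closure_iff {R : Type*} [CommRing R] [IsDomain R] {μ z : R}
    {n : ℕ} (h : IsPrimitiveRoot μ n) (hn : 0 < n) :
    z ∈ Subring.closure {μ} ↔ ∃ c : Fin n.totient → ℤ, ∑ i, c i * μ ^ (i : ℕ) = z := by
  refine Subring.mem_closure_singleton_iff_of_monic (cyclotomic.monic n ℤ)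
    (natDegree_cyclotomic n ℤ) ?_
  rw [aeval_def, eval₂_eq_eval_map, map_cyclotomic]
  exact h.isRoot_cyclotomic hn

section SeventhRoots

variable {K : Type*} [Field K] {μ η z : K}

theorem IsPrimitiveRoot.sum_pow_seven_eq_zero (hμ : IsPrimitiveRoot μ 7) :
    μ ^ 6 + μ ^ 5 + μ ^ 4 + μ ^ 3 + μ ^ 2 + μ + 1 = 0 := by
  have := hμ.geom_sum_eq_zero (by norm_num)
  simp only [Finset.sum_range_succ, Finset.sum_range_zero] at this
  linear_combination this

theorem IsPrimitiveRoot.gaussPeriod_sq_add_self_add_two_eq_zero (hμ : IsPrimitiveRoot μ 7)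
    (hη : η = μ + μ ^ 2 + μ ^ 4) : η ^ 2 + η + 2 = 0 := by
  rw [hη]
  linear_combination 2 * hμ.sum_pow_seven_eq_zero + μ * hμ.pow_eq_one

theorem closure_gaussPeriod_le_closure (hη : η = μ + μ ^ 2 + μ ^ 4) :
    Subring.closure {η} ≤ Subring.closure {μ} := by
  have hμ : μ ∈ Subring.closure {μ} := Subring.subset_closure rfl
  rw [Subring.closure_le, Set.singleton_subset_iff, hη]
  exact add_mem (add_mem hμ (pow_mem hμ 2)) (pow_mem hμ 4)

theorem exists_gaussPeriod_decomposition (hμ : IsPrimitiveRoot μ 7) (hη : η = μ + μ ^ 2 + μ ^ 4)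
    (hz : z ∈ Subring.closure {μ}) :
    ∃ a b c : K, a ∈ Subring.closure {η} ∧ b ∈ Subring.closure {η} ∧
      c ∈ Subring.closure {η} ∧ z = a + μ * b + μ ^ 2 * c := by
  rw [hμ.mem_subring_closure_iff (by norm_num),
    show Nat.totient 7 = 6 from Nat.totient_prime Nat.prime_seven] at hz
  obtain ⟨n, rfl⟩ := hz
  have mem (u v : ℤ) : u + v * η ∈ Subring.closure {η} :=
    (Subring.mem_closure_singleton_iff_of_sq_add_self_add_two_eq_zero
      (hμ.gaussPeriod_sq_add_self_add_two_eq_zero hη)).2 ⟨u, v, rfl⟩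
  -- the inverse of the coordinate map in `eq_zero_of_add_mul_add_sq_mul_eq_zero`
  refine ⟨_, _, _, mem (n 0 + n 3 - n 5) (n 4), mem (n 1 + n 3 - n 4 - n 5) (n 3),
    mem (n 2 - n 4 - n 5) (n 3 - n 5), ?_⟩
  norm_num [Fin.sum_univ_six]
  rw [hη]
  linear_combination (n 5 - n 3 : K) * hμ.sum_pow_seven_eq_zero

theorem eq_zero_of_add_mul_add_sq_mul_eq_zero [CharZero K] (hμ : IsPrimitiveRoot μ 7)
    (hη : η = μ + μ ^ 2 + μ ^ 4) {a b c : K} (ha : a ∈ Subring.closure {η})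
    (hb : b ∈ Subring.closure {η}) (hc : c ∈ Subring.closure {η})
    (h : a + μ * b + μ ^ 2 * c = 0) : a = 0 ∧ b = 0 ∧ c = 0 := by
  have hmem (w : K) := Subring.mem_closure_singleton_iff_of_sq_add_self_add_two_eq_zero (z := w)
    (hμ.gaussPeriod_sq_add_self_add_two_eq_zero hη)
  obtain ⟨ua, va, rfl⟩ := (hmem a).1 ha
  obtain ⟨ub, vb, rfl⟩ := (hmem b).1 hb
  obtain ⟨uc, vc, rfl⟩ := (hmem c).1 hc
  have hli := hμ.linearIndependent_int_pow (by norm_num)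
  rw [show Nat.totient 7 = 6 from Nat.totient_prime Nat.prime_seven] at hli
  -- the coordinates of `a + μ * b + μ ^ 2 * c` in the basis `1, μ, …, μ ^ 5`
  have hcoord := Fintype.linearIndependent_iff.1 hli
    ![ua - vc, va + ub - vc, va + vb + uc - vc, vb, va, vb - vc] (by
      norm_num [Fin.sum_univ_six]
      rw [hη] at h
      push_cast
      linear_combination h - (vc : K) * hμ.sum_pow_seven_eq_zero)
  have h0 : ua - vc = 0 := hcoord 0
  have h1 : va + ub - vc = 0 := hcoord 1
  have h2 : va + vb + uc - vc = 0 := hcoord 2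
  have h3 : vb = 0 := hcoord 3
  have h4 : va = 0 := hcoord 4
  have h5 : vb - vc = 0 := hcoord 5
  obtain ⟨rfl, rfl, rfl, rfl, rfl, rfl⟩ :
      ua = 0 ∧ va = 0 ∧ ub = 0 ∧ vb = 0 ∧ uc = 0 ∧ vc = 0 := by
    omega
  simp

end SeventhRoots

/-- ℤ[μ] is a free ℤ[η]-module of rank 3 with basis {1, μ, μ²}:
existence and uniqueness of the decomposition z = a + μ b + μ² c with a,b,c ∈ ℤ[η]. -/
theorem Zmu_free_over_Zeta
    (μ η : ℂ) (hμ : μ = exp (2 * Real.pi * I / 7)) (hη : η = μ + μ ^ 2 + μ ^ 4) :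
    (∀ z : ℂ, z ∈ Subring.closure {μ} ↔
      ∃ a b c : ℂ, a ∈ Subring.closure {η} ∧ b ∈ Subring.closure {η} ∧
        c ∈ Subring.closure {η} ∧ z = a + μ * b + μ ^ 2 * c) ∧
    (∀ a b c a' b' c' : ℂ,
      a ∈ Subring.closure {η} → b ∈ Subring.closure {η} → c ∈ Subring.closure {η} →
      a' ∈ Subring.closure {η} → b' ∈ Subring.closure {η} → c' ∈ Subring.closure {η} →
      a + μ * b + μ ^ 2 * c = a' + μ * b' + μ ^ 2 * c' →
      a = a' ∧ b = b' ∧ c = c') := by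
  have hprim : IsPrimitiveRoot μ 7 := hμ ▸ Complex.isPrimitiveRoot_exp 7 (by norm_num)
  have hle := closure_gaussPeriod_le_closure hη
  have hμmem : μ ∈ Subring.closure {μ} := Subring.subset_closure rfl
  refine ⟨fun z => ⟨exists_gaussPeriod_decomposition hprim hη, ?_⟩, ?_⟩
  · rintro ⟨a, b, c, ha, hb, hc, rfl⟩
    exact add_mem (add_mem (hle ha) (mul_mem hμmem (hle hb)))
      (mul_mem (pow_mem hμmem 2) (hle hc))
  · intro a b c a' b' c' ha hb hc ha' hb' hc' h
    obtain ⟨h₁, h₂, h₃⟩ := eq_zero_of_add_mul_add_sq_mul_eq_zero hprim hη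
      (sub_mem ha ha') (sub_mem hb hb') (sub_mem hc hc') (by linear_combination h)
    exact ⟨sub_eq_zero.1 h₁, sub_eq_zero.1 h₂, sub_eq_zero.1 h₃⟩
end

section
/- The map h: (X,Y) ↦ (1/(1−X), −X/Y³) maps the affine curve Y⁷ = X²(X−1) (with X ≠ 1, Y ≠ 0) to itself, i.e., if Y⁷ = X²(X−1) with X ≠ 1 and Y ≠ 0, then setting X' = 1/(1−X) and Y' = −X/Y³, one has Y'⁷ = X'²(X'−1). -/
theorem h_preserves_klein_affine_curve
    (X Y : ℂ) (hC : Y ^ 7 = X ^ 2 * (X - 1)) (hX : X ≠ 1) (hY : Y ≠ 0) :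
    (-X / Y ^ 3) ^ 7 = (1 / (1 - X)) ^ 2 * (1 / (1 - X) - 1) := by
  have h1 : (1 : ℂ) - X ≠ 0 := sub_ne_zero.mpr fun h => hX h.symm
  field_simp
  linear_combination (-X*Y^14 + (X^3 - X^4)*Y^7 + (2*X^6 - X^5 - X^7)) * hC
end
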